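/- arXiv:2510.27557 — 2 statements merged into one kernel-verified Lean document; each statement's English description precedes it below -/
import Mathlib

section
/- For any functor F : A ⥤ C, the projection functor ev₁ : Comma F (𝟭 C) ⥤ C, sending a pair (a, g : F.obj a → c) to c, is a cocartesian fibration (the free cocartesian fibration on F). Moreover, for any strictly commutative square of functors G ∘ H = K ∘ F, with H : A ⥤ B, F : A ⥤ C, G : B ⥤ D and K : C ⥤ D, the induced functor Comma F (𝟭 C) ⥤ Comma G (𝟭 D), sending (a, g : F.obj a → c) to (H.obj a, K.map g : G.obj (H.obj a) → K.obj c), is a cocartesian functor over K with respect to the two projection cocartesian fibrations ev₁. -/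
open CategoryTheory

universe v u

namespace Paper

/-- The canonical comparison functor `Arrow X ⥤ Comma p (𝟭 B)`. -/
def toCocartComma {X B : Type*} [Category X] [Category B] (p : X ⥤ B) :
    Arrow X ⥤ Comma p (𝟭 B) where
  obj f := { left := f.left, right := p.obj f.right, hom := p.map f.hom }
  map {f g} φ :=
    { left := φ.left
      right := p.map φ.right
      w := by
        dsimp
        rw [← p.map_comp, ← p.map_comp, Arrow.w] }

/-- A functor `p : X ⥤ B` is a cocartesian fibration if the canonical comparison functor
`Arrow X ⥤ Comma p (𝟭 B)` admits a fully faithful left adjoint. -/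
def IsCocartesianFibration {X B : Type*} [Category X] [Category B] (p : X ⥤ B) : Prop :=
  ∃ (L : Comma p (𝟭 B) ⥤ Arrow X) (adj : L ⊣ toCocartComma p), IsIso adj.unit

/-- The mate of a strictly commutative square `m ⋙ b = a ⋙ n` in which the two functors
`a` and `b` admit left adjoints `a'` resp. `b'`. -/
def mateRR {A X Y B : Type*} [Category A] [Category X] [Category Y] [Category B]
    {a : X ⥤ A} {a' : A ⥤ X} {b : Y ⥤ B} {b' : B ⥤ Y} {m : X ⥤ Y} {n : A ⥤ B}
    (adja : a' ⊣ a) (adjb : b' ⊣ b) (hsq : m ⋙ b = a ⋙ n) : n ⋙ b' ⟶ a' ⋙ m :=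
  Functor.whiskerRight adja.unit (n ⋙ b') ≫
    eqToHom (by
      simp only [Functor.assoc]
      rw [← Functor.assoc a n b', ← hsq]
      simp only [Functor.assoc]) ≫
    Functor.whiskerLeft (a' ⋙ m) adjb.counit

/-- The functor `Comma p (𝟭 A) ⥤ Comma q (𝟭 B)`, `(x, g) ↦ (F.obj x, G.map g)`, induced by
a strictly commutative square `F ⋙ q = p ⋙ G`. -/
def commaMapCocart {X A Y B : Type*} [Category X] [Category A] [Category Y] [Category B]
    (p : X ⥤ A) (q : Y ⥤ B) (F : X ⥤ Y) (G : A ⥤ B)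
    (h : F ⋙ q = p ⋙ G) : Comma p (𝟭 A) ⥤ Comma q (𝟭 B) where
  obj c :=
    { left := F.obj c.left
      right := G.obj c.right
      hom := eqToHom (Functor.congr_obj h c.left) ≫ G.map c.hom }
  map {c c'} φ :=
    { left := F.map φ.left
      right := G.map φ.right
      w := by
        have hh := Functor.congr_hom h φ.left
        have hw := φ.w
        simp only [Functor.comp_map] at hh
        simp only [Functor.id_map] at hw ⊢
        rw [hh]
        simp only [Category.assoc, eqToHom_trans_assoc, eqToHom_refl, Category.id_comp]
        rw [← G.map_comp, ← G.map_comp, hw] }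

/-- `F` is a cocartesian functor over `G` if the induced square relating the two comparison
functors is adjointable with respect to the cocartesian-lift left adjoints. -/
def IsCocartesianFunctor {X A Y B : Type*} [Category X] [Category A] [Category Y] [Category B]
    (p : X ⥤ A) (q : Y ⥤ B) (F : X ⥤ Y) (G : A ⥤ B)
    (h : F ⋙ q = p ⋙ G) : Prop :=
  ∃ (Lp : Comma p (𝟭 A) ⥤ Arrow X) (adjp : Lp ⊣ toCocartComma p)
    (Lq : Comma q (𝟭 B) ⥤ Arrow Y) (adjq : Lq ⊣ toCocartComma q)
    (_ : IsIso adjp.unit) (_ : IsIso adjq.unit)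
    (hsq : F.mapArrow ⋙ toCocartComma q = toCocartComma p ⋙ commaMapCocart p q F G h),
    IsIso (mateRR adjp adjq hsq)

/-! The cocartesian lift of `(a, g : F.obj a ⟶ c)` along `u : c ⟶ c'` is `(𝟙 a, u) : (a, g) ⟶
(a, g ≫ u)`, and a morphism of `Comma F (𝟭 C)` whose `A`-component is invertible is cocartesian.
Choosing these lifts gives a left adjoint to the comparison functor whose unit is the identity and
whose counit is invertible at every arrow with invertible `A`-component. The functor induced by
`(H, K)` acts on `A`-components by `H`, so it sends the chosen lifts to such arrows, which makes the
mate of the square invertible. -/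

universe v₁ v₂ u₁ u₂

theorem _root_.CategoryTheory.Comma.isIso_of_isIso_left_of_isIso_right
    {T₁ T₂ T : Type*} [Category T₁] [Category T₂] [Category T] {L : T₁ ⥤ T} {R : T₂ ⥤ T}
    {X Y : Comma L R} (f : X ⟶ Y) [IsIso f.left] [IsIso f.right] : IsIso f :=
  (Comma.isoMk (asIso f.left) (asIso f.right) f.w).isIso_hom

theorem _root_.CategoryTheory.Comma.mk_eq_mk_of_eq_right
    {T₁ T₂ T : Type*} [Category T₁] [Category T₂] [Category T] {L : T₁ ⥤ T} {R : T₂ ⥤ T}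
    {l : T₁} {r₁ r₂ : T₂} {h₁ : L.obj l ⟶ R.obj r₁} {h₂ : L.obj l ⟶ R.obj r₂} (e : r₁ = r₂)
    (he : h₁ ≫ eqToHom (congrArg R.obj e) = h₂) : (⟨l, r₁, h₁⟩ : Comma L R) = ⟨l, r₂, h₂⟩ := by
  subst e he
  simp

theorem isIso_mateRR_of_isIso_counit_app
    {A X Y B : Type*} [Category A] [Category X] [Category Y] [Category B]
    {a : X ⥤ A} {a' : A ⥤ X} {b : Y ⥤ B} {b' : B ⥤ Y} {m : X ⥤ Y} {n : A ⥤ B}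
    (adja : a' ⊣ a) (adjb : b' ⊣ b) (hsq : m ⋙ b = a ⋙ n) [IsIso adja.unit]
    (hb : ∀ z, IsIso (adjb.counit.app (m.obj (a'.obj z)))) : IsIso (mateRR adja adjb hsq) := by
  rw [NatTrans.isIso_iff_isIso_app]
  intro z
  have := hb z
  simp only [mateRR, NatTrans.comp_app, Functor.whiskerRight_app, Functor.whiskerLeft_app,
    eqToHom_app, Functor.comp_obj]
  infer_instance

theorem mapArrow_comp_toCocartComma
    {X A Y B : Type*} [Category X] [Category A] [Category Y] [Category B]
    (p : X ⥤ A) (q : Y ⥤ B) (F : X ⥤ Y) (G : A ⥤ B) (h : F ⋙ q = p ⋙ G) :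
    F.mapArrow ⋙ toCocartComma q = toCocartComma p ⋙ commaMapCocart p q F G h := by
  refine CategoryTheory.Functor.ext ?_ ?_
  · intro f
    refine Comma.mk_eq_mk_of_eq_right (Functor.congr_obj h f.right) ?_
    change q.map (F.map f.hom) ≫ eqToHom (Functor.congr_obj h f.right) =
      eqToHom (Functor.congr_obj h f.left) ≫ G.map (p.map f.hom)
    rw [← Functor.comp_map, Functor.congr_hom h f.hom]
    simp
  · intro f g φ
    ext
    · simp only [Comma.comp_left]
      erw [Comma.eqToHom_left, Comma.eqToHom_left]
      change F.map φ.left = 𝟙 _ ≫ F.map φ.left ≫ 𝟙 _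
      simp
    · simp only [Comma.comp_right]
      erw [Comma.eqToHom_right, Comma.eqToHom_right]
      change q.map (F.map φ.right) = eqToHom (Functor.congr_obj h f.right) ≫
        G.map (p.map φ.right) ≫ eqToHom (Functor.congr_obj h g.right).symm
      rw [← Functor.comp_map, Functor.congr_hom h φ.right]
      simp

theorem isIso_commaMapCocart_map_left
    {X A Y B : Type*} [Category X] [Category A] [Category Y] [Category B]
    (p : X ⥤ A) (q : Y ⥤ B) (F : X ⥤ Y) (G : A ⥤ B) (h : F ⋙ q = p ⋙ G)
    {c c' : Comma p (𝟭 A)} (φ : c ⟶ c') [IsIso φ.left] :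
    IsIso ((commaMapCocart p q F G h).map φ).left :=
  Functor.map_isIso F φ.left

section FreeCocartesianFibration

variable {A : Type u₁} {C : Type u₂} [Category.{v₁} A] [Category.{v₂} C] (F : A ⥤ C)

def pushforward (z : Comma (Comma.snd F (𝟭 C)) (𝟭 C)) : Comma F (𝟭 C) :=
  ⟨z.left.left, z.right, z.left.hom ≫ z.hom⟩

def cocartesianLift (z : Comma (Comma.snd F (𝟭 C)) (𝟭 C)) : z.left ⟶ pushforward F z where
  left := 𝟙 _
  right := z.hom
  w := by simp [pushforward]

instance isIso_cocartesianLift_left (z : Comma (Comma.snd F (𝟭 C)) (𝟭 C)) :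
    IsIso (cocartesianLift F z).left :=
  IsIso.id _

def cocartesianLiftHomEquiv (z : Comma (Comma.snd F (𝟭 C)) (𝟭 C)) (f : Arrow (Comma F (𝟭 C))) :
    (Arrow.mk (cocartesianLift F z) ⟶ f) ≃ (z ⟶ (toCocartComma (Comma.snd F (𝟭 C))).obj f) where
  toFun ψ :=
    { left := ψ.left
      right := ψ.right.right
      w := congrArg CommaMorphism.right ψ.w }
  invFun χ := Arrow.homMk χ.left
    { left := (χ.left ≫ f.hom).left
      right := χ.right
      w := (χ.left ≫ f.hom).w.trans
        ((congrArg (z.left.hom ≫ ·) χ.w).trans (Category.assoc _ _ _).symm) }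
    (Comma.hom_ext _ _ (Category.id_comp _).symm χ.w)
  left_inv ψ := Arrow.hom_ext _ _ rfl
    (Comma.hom_ext _ _ ((congrArg CommaMorphism.left ψ.w).trans (Category.id_comp _)) rfl)
  right_inv _ := rfl

def freeCocartesianLift : Comma (Comma.snd F (𝟭 C)) (𝟭 C) ⥤ Arrow (Comma F (𝟭 C)) :=
  Adjunction.leftAdjointOfEquiv (cocartesianLiftHomEquiv F) fun _ _ _ _ _ => rfl

def freeCocartesianAdjunction : freeCocartesianLift F ⊣ toCocartComma (Comma.snd F (𝟭 C)) :=
  Adjunction.adjunctionOfEquivLeft _ _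

instance isIso_freeCocartesianAdjunction_unit : IsIso (freeCocartesianAdjunction F).unit :=
  -- each component of the unit is definitionally an identity
  have (z : Comma (Comma.snd F (𝟭 C)) (𝟭 C)) : IsIso ((freeCocartesianAdjunction F).unit.app z) :=
    IsIso.id z
  NatIso.isIso_of_isIso_app _

theorem freeCocartesianAdjunction_counit_app_right_left (f : Arrow (Comma F (𝟭 C))) :
    ((freeCocartesianAdjunction F).counit.app f).right.left = f.hom.left :=
  Category.id_comp _

instance isIso_freeCocartesianAdjunction_counit_app (f : Arrow (Comma F (𝟭 C)))
    [hf : IsIso f.hom.left] : IsIso ((freeCocartesianAdjunction F).counit.app f) := by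
  have : IsIso ((freeCocartesianAdjunction F).counit.app f).right.left := by
    rw [freeCocartesianAdjunction_counit_app_right_left]
    exact hf
  have : IsIso ((freeCocartesianAdjunction F).counit.app f).right.right := IsIso.id _
  have : IsIso ((freeCocartesianAdjunction F).counit.app f).right :=
    Comma.isIso_of_isIso_left_of_isIso_right _
  have : IsIso ((freeCocartesianAdjunction F).counit.app f).left := IsIso.id _
  exact Arrow.isIso_of_isIso_left_of_isIso_right _

end FreeCocartesianFibration

/-- For any functor `F : A ⥤ C`, the projection
`ev₁ : Comma F (𝟭 C) ⥤ C` is a cocartesian fibration, and for any strictly commutative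
square `H ⋙ G = F ⋙ K` the induced functor `Comma F (𝟭 C) ⥤ Comma G (𝟭 D)`,
`(a, g) ↦ (H.obj a, K.map g)`, is a cocartesian functor over `K`. -/
theorem statement16 {A B C D : Type u}
    [Category.{v} A] [Category.{v} B] [Category.{v} C] [Category.{v} D]
    (F : A ⥤ C) (H : A ⥤ B) (G : B ⥤ D) (K : C ⥤ D) (hsq : H ⋙ G = F ⋙ K) :
    IsCocartesianFibration (Comma.snd F (𝟭 C)) ∧
    ∃ h : commaMapCocart F G H K hsq ⋙ Comma.snd G (𝟭 D) = Comma.snd F (𝟭 C) ⋙ K,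
      IsCocartesianFunctor (Comma.snd F (𝟭 C)) (Comma.snd G (𝟭 D))
        (commaMapCocart F G H K hsq) K h := by
  refine ⟨⟨_, freeCocartesianAdjunction F, inferInstance⟩, rfl, _, freeCocartesianAdjunction F,
    _, freeCocartesianAdjunction G, inferInstance, inferInstance,
    mapArrow_comp_toCocartComma _ _ _ _ _, isIso_mateRR_of_isIso_counit_app _ _ _ fun z => ?_⟩
  exact isIso_freeCocartesianAdjunction_counit_app G _
    (hf := isIso_commaMapCocart_map_left F G H K hsq (cocartesianLift F z))

end Paper
end

section
/- Let a strictly commutative square of functors q ∘ U = V ∘ p be given, with p : A ⥤ B a cocartesian fibration, U : A ⥤ C, V : B ⥤ D and q : C ⥤ D, and suppose U and V admit left adjoints F and G respectively, such that the square is adjointable: the mate natural transformation G ∘ q ⟶ p ∘ F, built from the unit of F ⊣ U and the counit of G ⊣ V via the square identification, is a natural isomorphism. Then the functor Comma (𝟭 C) U ⥤ Comma q V, sending an object (c, f : c → U.obj a) to (c, q.map f : q.obj c → V.obj (p.obj a)) (using q ∘ U = V ∘ p) and acting in the evident way on morphisms, admits a fully faithful left adjoint (a left adjoint whose unit is a natural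 isomorphism). -/
/-!
Transposing along `F ⊣ U` identifies `Comma (𝟭 C) U` with `Comma F (𝟭 A)`; transposing along
`G ⊣ V` and precomposing with the invertible mate `q ⋙ G ⟶ F ⋙ p` identifies `Comma q V` with
`Comma (F ⋙ p) (𝟭 B)`. Under these equivalences `commaSlice p U V q comm` becomes
`(c, F c ⟶ a) ↦ (c, p (F c) ⟶ p a)` (this compatibility is the defining property of the mate),
which is the base change along `F` of the comparison functor `Arrow A ⥤ Comma p (𝟭 B)`.
A universal arrow of the comparison functor at `(F c, b, h)` is an isomorphism, so its source can
be replaced by `F c`, giving a universal arrow of the base change at `(c, b, h)`. Hence the base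
change again has a fully faithful left adjoint, and so does its composite with the equivalences.
-/

open CategoryTheory

universe v u

namespace Paper

variable {A B C D : Type u} [Category.{v} A] [Category.{v} B] [Category.{v} C] [Category.{v} D]

/-- The functor `Comma (𝟭 C) U ⥤ Comma q V` induced by a strictly commutative square
`U ⋙ q = p ⋙ V`, sending `(c, f : c ⟶ U.obj a)` to `(c, q.map f : q.obj c ⟶ V.obj (p.obj a))`. -/
def commaSlice (p : A ⥤ B) (U : A ⥤ C) (V : B ⥤ D) (q : C ⥤ D)
    (comm : U ⋙ q = p ⋙ V) : Comma (𝟭 C) U ⥤ Comma q V where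
  obj c :=
    { left := c.left
      right := p.obj c.right
      hom := q.map c.hom ≫ eqToHom (Functor.congr_obj comm c.right) }
  map {c c'} φ :=
    { left := φ.left
      right := p.map φ.right
      w := by
        have hh := Functor.congr_hom comm φ.right
        have hw := φ.w
        simp only [Functor.comp_map] at hh
        simp only [Functor.id_map] at hw ⊢
        have hh' : eqToHom (Functor.congr_obj comm c.right) ≫ V.map (p.map φ.right)
            = q.map (U.map φ.right) ≫ eqToHom (Functor.congr_obj comm c'.right) := by
          rw [hh]
          simp
        rw [Category.assoc, hh', ← Category.assoc, ← q.map_comp, hw, q.map_comp,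
          Category.assoc] }

def HasFullyFaithfulLeftAdjoint {𝒞 𝒟 : Type*} [Category 𝒞] [Category 𝒟] (R : 𝒟 ⥤ 𝒞) :
    Prop :=
  ∃ (L : 𝒞 ⥤ 𝒟) (adj : L ⊣ R), IsIso adj.unit

namespace HasFullyFaithfulLeftAdjoint

variable {𝒞 𝒟 ℰ : Type*} [Category 𝒞] [Category 𝒟] [Category ℰ]

lemma of_iso {R R' : 𝒟 ⥤ 𝒞} (h : HasFullyFaithfulLeftAdjoint R) (e : R ≅ R') :
    HasFullyFaithfulLeftAdjoint R' := by
  obtain ⟨L, adj, _⟩ := h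
  refine ⟨L, adj.ofNatIsoRight e, ?_⟩
  have : (adj.ofNatIsoRight e).unit = adj.unit ≫ Functor.whiskerLeft L e.hom := by
    ext X
    simp [Adjunction.ofNatIsoRight]
  rw [this]
  infer_instance

lemma comp {R₁ : 𝒟 ⥤ 𝒞} {R₂ : 𝒞 ⥤ ℰ} (h₁ : HasFullyFaithfulLeftAdjoint R₁)
    (h₂ : HasFullyFaithfulLeftAdjoint R₂) : HasFullyFaithfulLeftAdjoint (R₁ ⋙ R₂) := by
  obtain ⟨L₁, adj₁, _⟩ := h₁
  obtain ⟨L₂, adj₂, _⟩ := h₂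
  refine ⟨L₂ ⋙ L₁, adj₂.comp adj₁, ?_⟩
  have : ∀ X, IsIso ((adj₂.comp adj₁).unit.app X) := fun X => by
    rw [Adjunction.comp_unit_app]
    infer_instance
  exact NatIso.isIso_of_isIso_app _

lemma equivalence_functor (E : 𝒟 ≌ 𝒞) : HasFullyFaithfulLeftAdjoint E.functor :=
  ⟨E.inverse, E.symm.toAdjunction, inferInstanceAs (IsIso E.symm.unitIso.hom)⟩

lemma iff_universal {R : 𝒟 ⥤ 𝒞} : HasFullyFaithfulLeftAdjoint R ↔
    ∀ X : 𝒞, ∃ (Y : 𝒟) (η : X ⟶ R.obj Y), IsIso η ∧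
      ∀ Z, Function.Bijective fun ψ : Y ⟶ Z => η ≫ R.map ψ := by
  constructor
  · rintro ⟨L, adj, _⟩ X
    refine ⟨L.obj X, adj.unit.app X, inferInstance, fun Z => ?_⟩
    simpa only [← Adjunction.homEquiv_unit] using (adj.homEquiv X Z).bijective
  · intro h
    choose Y η hη hbij using h
    let e X Z : (Y X ⟶ Z) ≃ (X ⟶ R.obj Z) := Equiv.ofBijective _ (hbij X Z)
    have he : ∀ X Z Z' (g : Z ⟶ Z') h, e X Z' (h ≫ g) = e X Z h ≫ R.map g := by
      intros
      simp [e]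
    refine ⟨_, Adjunction.adjunctionOfEquivLeft e he, ?_⟩
    have : ∀ X, IsIso ((Adjunction.adjunctionOfEquivLeft e he).unit.app X) := fun X => by
      simpa [e] using hη X
    exact NatIso.isIso_of_isIso_app _

end HasFullyFaithfulLeftAdjoint

section CommaTranspose

variable {𝒜 ℬ 𝒞 : Type*} [Category 𝒜] [Category ℬ] [Category 𝒞]
  {G : 𝒞 ⥤ ℬ} {V : ℬ ⥤ 𝒞} (adj : G ⊣ V) (q : 𝒜 ⥤ 𝒞)

-- The functors of this file are reducible: their values on objects occur in the types of comma
-- morphisms, where `simp` can only see through them by unfolding.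
abbrev commaTransposeFunctor : Comma (q ⋙ G) (𝟭 ℬ) ⥤ Comma q V where
  obj X := ⟨X.left, X.right, adj.homEquiv _ _ X.hom⟩
  map φ := ⟨φ.left, φ.right, by
    simpa [← adj.homEquiv_naturality_left, ← adj.homEquiv_naturality_right] using φ.w⟩

abbrev commaTransposeInverse : Comma q V ⥤ Comma (q ⋙ G) (𝟭 ℬ) where
  obj X := ⟨X.left, X.right, (adj.homEquiv _ _).symm X.hom⟩
  map φ := ⟨φ.left, φ.right, by
    simp [← adj.homEquiv_naturality_left_symm, ← adj.homEquiv_naturality_right_symm]⟩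

def commaTransposeEquiv : Comma (q ⋙ G) (𝟭 ℬ) ≌ Comma q V :=
  CategoryTheory.Equivalence.mk (commaTransposeFunctor adj q) (commaTransposeInverse adj q)
    (NatIso.ofComponents (fun X => Comma.isoMk (Iso.refl _) (Iso.refl _) (by simp))
      (fun _ => by ext <;> simp))
    (NatIso.ofComponents (fun X => Comma.isoMk (Iso.refl _) (Iso.refl _) (by simp))
      (fun _ => by ext <;> simp))

end CommaTranspose

lemma Comma.isIso_of_isIso_left_right {𝒜 ℬ 𝒯 : Type*} [Category 𝒜] [Category ℬ] [Category 𝒯]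
    {L : 𝒜 ⥤ 𝒯} {R : ℬ ⥤ 𝒯} {X Y : Comma L R} (φ : X ⟶ Y) [IsIso φ.left] [IsIso φ.right] :
    IsIso φ :=
  (Comma.isoMk (asIso φ.left) (asIso φ.right) φ.w).isIso_hom

section CocartesianFibration

variable {𝒜 ℬ 𝒞 : Type*} [Category 𝒜] [Category ℬ] [Category 𝒞]

abbrev toCocartCommaAlong (K : 𝒞 ⥤ 𝒜) (p : 𝒜 ⥤ ℬ) :
    Comma K (𝟭 𝒜) ⥤ Comma (K ⋙ p) (𝟭 ℬ) where
  obj X := ⟨X.left, p.obj X.right, p.map X.hom⟩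
  map φ := ⟨φ.left, p.map φ.right, by
    simp only [Functor.comp_map, Functor.id_map, ← p.map_comp]
    exact congrArg p.map φ.w⟩

lemma IsCocartesianFibration.hasFullyFaithfulLeftAdjoint_toCocartCommaAlong {p : 𝒜 ⥤ ℬ}
    (hp : IsCocartesianFibration p) (K : 𝒞 ⥤ 𝒜) :
    HasFullyFaithfulLeftAdjoint (toCocartCommaAlong K p) := by
  -- `toCocartComma p` is `toCocartCommaAlong (𝟭 𝒜) p` up to unfolding.
  have hp' : HasFullyFaithfulLeftAdjoint (toCocartCommaAlong (𝟭 𝒜) p) := hp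
  rw [HasFullyFaithfulLeftAdjoint.iff_universal]
  intro X
  obtain ⟨Y₀, η₀, _, hbij⟩ :=
    HasFullyFaithfulLeftAdjoint.iff_universal.mp hp' ⟨K.obj X.left, X.right, X.hom⟩
  let Y : Comma K (𝟭 𝒜) := ⟨X.left, Y₀.right, η₀.left ≫ Y₀.hom⟩
  let η : X ⟶ (toCocartCommaAlong K p).obj Y := ⟨𝟙 _, η₀.right, by simpa [Y] using η₀.w⟩
  have : IsIso η.right := inferInstanceAs (IsIso η₀.right)
  have : IsIso η := Comma.isIso_of_isIso_left_right η
  refine ⟨Y, η, this, fun Z => ⟨fun ψ₁ ψ₂ h => ?_, fun χ => ?_⟩⟩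
  · have hl : ψ₁.left = ψ₂.left := by simpa [η] using congrArg CommaMorphism.left h
    have hr : p.map ψ₁.right = p.map ψ₂.right :=
      (cancel_epi η₀.right).1 (by simpa [η] using congrArg CommaMorphism.right h)
    let m (ψ : Y ⟶ Z) : Y₀ ⟶ Arrow.mk Z.hom :=
      ⟨inv η₀.left ≫ K.map ψ.left, ψ.right, by simp [Y]⟩
    have : m ψ₁ = m ψ₂ := (hbij _).1 (by ext <;> simp [m, hl, hr])
    exact CommaMorphism.ext hl (congrArg (fun m : Y₀ ⟶ Arrow.mk Z.hom => m.right) this)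
  · obtain ⟨m, hm⟩ := (hbij (Arrow.mk Z.hom)).2 ⟨K.map χ.left, χ.right, χ.w⟩
    have hml : η₀.left ≫ m.left = K.map χ.left := congrArg CommaMorphism.left hm
    have hmr : η₀.right ≫ p.map m.right = χ.right := congrArg CommaMorphism.right hm
    refine ⟨⟨χ.left, m.right, ?_⟩, ?_⟩
    · simpa [Y, ← hml] using η₀.left ≫= m.w
    · ext <;> simp [η, hmr]

end CocartesianFibration

lemma homEquiv_mateRR_app_comp {𝒜 𝒳 𝒴 ℬ : Type*} [Category 𝒜] [Category 𝒳] [Category 𝒴]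
    [Category ℬ] {a : 𝒳 ⥤ 𝒜} {a' : 𝒜 ⥤ 𝒳} {b : 𝒴 ⥤ ℬ} {b' : ℬ ⥤ 𝒴} {m : 𝒳 ⥤ 𝒴} {n : 𝒜 ⥤ ℬ}
    (adja : a' ⊣ a) (adjb : b' ⊣ b) (hsq : m ⋙ b = a ⋙ n) {c : 𝒜} {x : 𝒳}
    (f : c ⟶ a.obj x) :
    adjb.homEquiv _ _ ((mateRR adja adjb hsq).app c ≫ m.map ((adja.homEquiv c x).symm f)) =
      n.map f ≫ eqToHom (Functor.congr_obj hsq x).symm := by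
  have hmate : (mateRR adja adjb hsq).app c = (adjb.homEquiv (n.obj c) ((a' ⋙ m).obj c)).symm
      (n.map (adja.unit.app c) ≫ eqToHom (Functor.congr_obj hsq (a'.obj c)).symm) := by
    simp [mateRR, Adjunction.homEquiv_counit, eqToHom_map]
  have hnat := Functor.congr_hom hsq ((adja.homEquiv c x).symm f)
  simp only [Functor.comp_map] at hnat
  rw [adjb.homEquiv_naturality_right, hmate, Equiv.apply_symm_apply, Category.assoc, hnat]
  simp [← Functor.map_comp_assoc, ← Adjunction.homEquiv_unit]

def commaSliceIsoComp (p : A ⥤ B) (U : A ⥤ C) (V : B ⥤ D) (q : C ⥤ D) (comm : U ⋙ q = p ⋙ V)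
    {F : C ⥤ A} {G : D ⥤ B} (adjF : F ⊣ U) (adjG : G ⊣ V) :
    commaTransposeInverse adjF (𝟭 C) ⋙ toCocartCommaAlong F p ⋙
      Comma.mapLeft (𝟭 B) (mateRR adjF adjG comm.symm) ⋙ commaTransposeFunctor adjG q ≅
        commaSlice p U V q comm :=
  NatIso.ofComponents
    (fun Z => Comma.isoMk (Iso.refl _) (Iso.refl _) (by
      simp only [Functor.comp_obj, Functor.id_obj, commaSlice, Iso.refl_hom,
        CategoryTheory.Functor.map_id, Category.id_comp, Comma.mapLeft_obj_hom, Category.comp_id]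
      exact (homEquiv_mateRR_app_comp adjF adjG comm.symm Z.hom).symm))
    (fun _ => by ext <;> simp [commaSlice])

/-- Let `q ∘ U = V ∘ p` be a strictly commutative square with `p` a
cocartesian fibration, and suppose `U` and `V` admit left adjoints `F` resp. `G` such that
the square is adjointable (the mate `G ∘ q ⟶ p ∘ F` is invertible). Then the induced
functor `Comma (𝟭 C) U ⥤ Comma q V` admits a fully faithful left adjoint. -/
theorem statement19 (p : A ⥤ B) (U : A ⥤ C) (V : B ⥤ D) (q : C ⥤ D)
    (comm : U ⋙ q = p ⋙ V)
    (hp : IsCocartesianFibration p)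
    (F : C ⥤ A) (G : D ⥤ B) (adjF : F ⊣ U) (adjG : G ⊣ V)
    (hmate : IsIso (mateRR adjF adjG comm.symm)) :
    ∃ (L : Comma q V ⥤ Comma (𝟭 C) U) (adj : L ⊣ commaSlice p U V q comm),
      IsIso adj.unit := by
  have hF : HasFullyFaithfulLeftAdjoint (commaTransposeInverse adjF (𝟭 C)) :=
    .equivalence_functor (commaTransposeEquiv adjF (𝟭 C)).symm
  have hmapLeft : HasFullyFaithfulLeftAdjoint (Comma.mapLeft (𝟭 B) (mateRR adjF adjG comm.symm)) :=
    .equivalence_functor (Comma.mapLeftIso (𝟭 B) (asIso (mateRR adjF adjG comm.symm)).symm)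
  have hG : HasFullyFaithfulLeftAdjoint (commaTransposeFunctor adjG q) :=
    .equivalence_functor (commaTransposeEquiv adjG q)
  exact (hF.comp ((hp.hasFullyFaithfulLeftAdjoint_toCocartCommaAlong F).comp
    (hmapLeft.comp hG))).of_iso (commaSliceIsoComp p U V q comm adjF adjG)

end Paper
end
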